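/- arXiv:2208.11897 — 6 statements merged into one kernel-verified Lean document; each statement's English description precedes it below -/
import Mathlib

section
/- Let V, g, φ, ξ, η, A, D be as in the context, let k be a nonzero real number, suppose Aξ = αξ for some real number α (the Hopf case) and that A satisfies the Maeda relations for α. Then A_T^{(k)} cannot be η-pure with respect to φ: it is impossible that A_T^{(k)}(φX, Y) = A_T^{(k)}(X, φY) for all X, Y ∈ D. (Theorem 4, Hopf case.) -/
/-!
Take a unit principal vector `X ∈ D`, `AX = lX`; by Maeda's relations `φX` is principal too,
with `AφX = mφX` and `m(2l - α) = αl + 2`. On `D` the torsion `T^{(k)}_X Y` is the multiple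
`g(φAX, Y) - g(φAY, X)` of `ξ`, so both sides of the purity condition at `(X, X)` are multiples
of `ξ`; comparing them gives `(l + m)(l + m - 2α) = 0`. Substituting `m = -l` or `m = 2α - l`
into Maeda's relation yields `-2l² = 2` or `-2(l - α)² = 2`, which is absurd.
-/

open scoped InnerProductSpace
open Module

/-- The `k`-th Cho operator `F^{(k)}_X Y = g(φ(AX), Y)·ξ − η(Y)·φ(AX) − k·η(X)·φY`. -/
noncomputable def choF {V : Type*} [NormedAddCommGroup V] [InnerProductSpace ℝ V]
    (φ A : V →ₗ[ℝ] V) (ξ : V) (k : ℝ) (X Y : V) : V :=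
  ⟪φ (A X), Y⟫_ℝ • ξ - ⟪Y, ξ⟫_ℝ • φ (A X) - (k * ⟪X, ξ⟫_ℝ) • φ Y

/-- The `k`-th torsion operator `T^{(k)}_X Y = F^{(k)}_X Y − F^{(k)}_Y X`. -/
noncomputable def torT {V : Type*} [NormedAddCommGroup V] [InnerProductSpace ℝ V]
    (φ A : V →ₗ[ℝ] V) (ξ : V) (k : ℝ) (X Y : V) : V :=
  choF φ A ξ k X Y - choF φ A ξ k Y X

/-- `A_T^{(k)}(X, Y) = T^{(k)}_X (A Y) − A (T^{(k)}_X Y)`. -/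
noncomputable def AT {V : Type*} [NormedAddCommGroup V] [InnerProductSpace ℝ V]
    (φ A : V →ₗ[ℝ] V) (ξ : V) (k : ℝ) (X Y : V) : V :=
  torT φ A ξ k X (A Y) - A (torT φ A ξ k X Y)

structure IsAlmostContactMetric {V : Type*} [NormedAddCommGroup V] [InnerProductSpace ℝ V]
    (φ : V →ₗ[ℝ] V) (ξ : V) : Prop where
  norm_xi : ‖ξ‖ = 1
  map_map : ∀ X : V, φ (φ X) = -X + ⟪X, ξ⟫_ℝ • ξ
  inner_map_map : ∀ X Y : V, ⟪φ X, φ Y⟫_ℝ = ⟪X, Y⟫_ℝ - ⟪X, ξ⟫_ℝ * ⟪Y, ξ⟫_ℝ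

namespace IsAlmostContactMetric

variable {V : Type*} [NormedAddCommGroup V] [InnerProductSpace ℝ V] {φ : V →ₗ[ℝ] V} {ξ : V}
  (h : IsAlmostContactMetric φ ξ)
include h

theorem inner_xi_self : ⟪ξ, ξ⟫_ℝ = 1 := by
  rw [real_inner_self_eq_norm_sq, h.norm_xi, one_pow]

theorem inner_map_xi (X : V) : ⟪φ X, ξ⟫_ℝ = 0 := by
  -- `‖φ(φX)‖²` computed via `φ² = -1 + η ⊗ ξ` and via the metric condition differ by `η(φX)²`
  have hφφX := h.inner_map_map (φ X) (φ X)
  rw [h.map_map X, h.inner_map_map X X] at hφφX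
  simp only [inner_add_left, inner_add_right, inner_neg_left, inner_neg_right, inner_smul_left,
    inner_smul_right, RCLike.conj_to_real, h.inner_xi_self, real_inner_comm ξ X] at hφφX
  exact pow_eq_zero_iff two_ne_zero |>.mp (by nlinarith)

theorem map_map_of_inner_xi_eq_zero {X : V} (hX : ⟪X, ξ⟫_ℝ = 0) : φ (φ X) = -X := by
  rw [h.map_map, hX, zero_smul, add_zero]

theorem inner_map_map_self_of_inner_xi_eq_zero {X : V} (hX : ⟪X, ξ⟫_ℝ = 0) :
    ⟪φ X, φ X⟫_ℝ = ⟪X, X⟫_ℝ := by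
  rw [h.inner_map_map, hX, mul_zero, sub_zero]

end IsAlmostContactMetric

theorem LinearMap.IsSymmetric.map_mem_orthogonal_span_singleton {𝕜 E : Type*} [RCLike 𝕜]
    [NormedAddCommGroup E] [InnerProductSpace 𝕜 E] {T : E →ₗ[𝕜] E} (hT : T.IsSymmetric)
    {ξ : E} {μ : 𝕜} (hξ : T ξ = μ • ξ) {v : E} (hv : v ∈ (𝕜 ∙ ξ)ᗮ) : T v ∈ (𝕜 ∙ ξ)ᗮ := by
  rw [Submodule.mem_orthogonal_singleton_iff_inner_right] at hv ⊢
  rw [← hT, hξ, inner_smul_left, hv, mul_zero]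

theorem LinearMap.IsSymmetric.exists_unit_eigenvector_mem {𝕜 E : Type*} [RCLike 𝕜]
    [NormedAddCommGroup E] [InnerProductSpace 𝕜 E] [FiniteDimensional 𝕜 E] {T : E →ₗ[𝕜] E}
    (hT : T.IsSymmetric) {W : Submodule 𝕜 E} (hW : ∀ v ∈ W, T v ∈ W) (hW0 : 0 < finrank 𝕜 W) :
    ∃ x ∈ W, ‖x‖ = 1 ∧ ∃ μ : ℝ, T x = (μ : 𝕜) • x := by
  let hTW := hT.restrict_invariant hW
  let i : Fin (finrank 𝕜 W) := ⟨0, hW0⟩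
  refine ⟨hTW.eigenvectorBasis rfl i, (hTW.eigenvectorBasis rfl i).2, ?_, hTW.eigenvalues rfl i, ?_⟩
  · exact (hTW.eigenvectorBasis rfl).orthonormal.1 i
  · exact congrArg Subtype.val (hTW.apply_eigenvectorBasis rfl i)

section Torsion

variable {V : Type*} [NormedAddCommGroup V] [InnerProductSpace ℝ V] (φ A : V →ₗ[ℝ] V) (ξ : V)
  (k : ℝ)

theorem torT_of_inner_xi_eq_zero {X Y : V} (hX : ⟪X, ξ⟫_ℝ = 0) (hY : ⟪Y, ξ⟫_ℝ = 0) :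
    torT φ A ξ k X Y = (⟪φ (A X), Y⟫_ℝ - ⟪φ (A Y), X⟫_ℝ) • ξ := by
  simp only [torT, choF, hX, hY, zero_smul, mul_zero, sub_zero, sub_smul]

theorem AT_of_inner_xi_eq_zero {α : ℝ} (hAξ : A ξ = α • ξ) {X Y : V} (hX : ⟪X, ξ⟫_ℝ = 0)
    (hY : ⟪Y, ξ⟫_ℝ = 0) (hAY : ⟪A Y, ξ⟫_ℝ = 0) :
    AT φ A ξ k X Y = (⟪φ (A X), A Y⟫_ℝ - ⟪φ (A (A Y)), X⟫_ℝ
      - α * (⟪φ (A X), Y⟫_ℝ - ⟪φ (A Y), X⟫_ℝ)) • ξ := by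
  rw [AT, torT_of_inner_xi_eq_zero φ A ξ k hX hAY, torT_of_inner_xi_eq_zero φ A ξ k hX hY,
    map_smul, hAξ, smul_smul, ← sub_smul]
  congr 1
  ring

end Torsion

section PrincipalPair

variable {V : Type*} [NormedAddCommGroup V] [InnerProductSpace ℝ V] {φ : V →ₗ[ℝ] V} {ξ : V}
  (hφ : IsAlmostContactMetric φ ξ) {A : V →ₗ[ℝ] V} {α : ℝ} (hAξ : A ξ = α • ξ) (k : ℝ)
  {X : V} (hX1 : ‖X‖ = 1) (hXξ : ⟪X, ξ⟫_ℝ = 0) {l m : ℝ} (hAX : A X = l • X)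
  (hAφX : A (φ X) = m • φ X)
include hφ hAξ hX1 hXξ hAX hAφX

theorem AT_map_self_of_eigenvector : AT φ A ξ k (φ X) X = ((α - l) * (l + m)) • ξ := by
  have hXX : ⟪X, X⟫_ℝ = 1 := by rw [real_inner_self_eq_norm_sq, hX1, one_pow]
  rw [AT_of_inner_xi_eq_zero φ A ξ k hAξ (hφ.inner_map_xi X) hXξ
    (by rw [hAX, inner_smul_left, hXξ, mul_zero])]
  simp only [hAX, hAφX, map_smul, inner_smul_left, inner_smul_right, RCLike.conj_to_real,
    hφ.map_map_of_inner_xi_eq_zero hXξ, inner_neg_left, hXX,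
    hφ.inner_map_map_self_of_inner_xi_eq_zero hXξ]
  congr 1
  ring

theorem AT_self_map_of_eigenvector : AT φ A ξ k X (φ X) = ((m - α) * (l + m)) • ξ := by
  have hXX : ⟪X, X⟫_ℝ = 1 := by rw [real_inner_self_eq_norm_sq, hX1, one_pow]
  rw [AT_of_inner_xi_eq_zero φ A ξ k hAξ hXξ (hφ.inner_map_xi X)
    (by rw [hAφX, inner_smul_left, hφ.inner_map_xi, mul_zero])]
  simp only [hAX, hAφX, map_smul, inner_smul_left, inner_smul_right, RCLike.conj_to_real,
    hφ.map_map_of_inner_xi_eq_zero hXξ, inner_neg_left, hXX,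
    hφ.inner_map_map_self_of_inner_xi_eq_zero hXξ]
  congr 1
  ring

end PrincipalPair

theorem add_mul_add_sub_ne_zero_of_maeda {α l m : ℝ} (hm : m * (2 * l - α) = α * l + 2) :
    (l + m) * (l + m - 2 * α) ≠ 0 := by
  intro h
  rcases mul_eq_zero.mp h with h | h
  · obtain rfl : m = -l := by linarith
    nlinarith [sq_nonneg l]
  · obtain rfl : m = 2 * α - l := by linarith
    nlinarith [sq_nonneg (l - α)]

theorem thm4_hopf_general {V : Type*} [NormedAddCommGroup V] [InnerProductSpace ℝ V]
    [FiniteDimensional ℝ V] (hdim : 5 ≤ Module.finrank ℝ V)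
    (φ : V →ₗ[ℝ] V) (ξ : V) (hξ : ‖ξ‖ = 1)
    (hφφ : ∀ X : V, φ (φ X) = -X + ⟪X, ξ⟫_ℝ • ξ)
    (hφg : ∀ X Y : V, ⟪φ X, φ Y⟫_ℝ = ⟪X, Y⟫_ℝ - ⟪X, ξ⟫_ℝ * ⟪Y, ξ⟫_ℝ)
    (A : V →ₗ[ℝ] V) (hA : ∀ X Y : V, ⟪A X, Y⟫_ℝ = ⟪X, A Y⟫_ℝ)
    (k : ℝ) (α : ℝ) (hAξ : A ξ = α • ξ)
    (hMaeda : ∀ (X : V) (l : ℝ), ‖X‖ = 1 → ⟪X, ξ⟫_ℝ = 0 → A X = l • X →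
      2 * l - α ≠ 0 ∧ A (φ X) = ((α * l + 2) / (2 * l - α)) • φ X) :
    ¬ (∀ X Y : V, ⟪X, ξ⟫_ℝ = 0 → ⟪Y, ξ⟫_ℝ = 0 →
      AT φ A ξ k (φ X) Y = AT φ A ξ k X (φ Y)) := by
  intro hpure
  have hφ : IsAlmostContactMetric φ ξ := ⟨hξ, hφφ, hφg⟩
  have hξ0 : ξ ≠ 0 := norm_ne_zero_iff.mp (by rw [hξ]; exact one_ne_zero)
  have hD : 0 < finrank ℝ (ℝ ∙ ξ)ᗮ := by
    have := Submodule.finrank_add_finrank_orthogonal (ℝ ∙ ξ)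
    rw [finrank_span_singleton hξ0] at this
    omega
  obtain ⟨X, hXD, hX1, l, hAX : A X = l • X⟩ :=
    LinearMap.IsSymmetric.exists_unit_eigenvector_mem hA
      (fun _ => LinearMap.IsSymmetric.map_mem_orthogonal_span_singleton hA hAξ) hD
  have hXξ : ⟪X, ξ⟫_ℝ = 0 := Submodule.mem_orthogonal_singleton_iff_inner_left.mp hXD
  obtain ⟨hne, hAφX⟩ := hMaeda X l hX1 hXξ hAX
  have hpureX := hpure X X hXξ hXξ
  rw [AT_map_self_of_eigenvector hφ hAξ k hX1 hXξ hAX hAφX,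
    AT_self_map_of_eigenvector hφ hAξ k hX1 hXξ hAX hAφX] at hpureX
  refine add_mul_add_sub_ne_zero_of_maeda (div_mul_cancel₀ _ hne) ?_
  linear_combination -smul_left_injective ℝ hξ0 hpureX

theorem thm4_hopf {V : Type*} [NormedAddCommGroup V] [InnerProductSpace ℝ V]
    [FiniteDimensional ℝ V] (hdim : 5 ≤ Module.finrank ℝ V)
    (φ : V →ₗ[ℝ] V) (ξ : V) (hξ : ‖ξ‖ = 1)
    (hφφ : ∀ X : V, φ (φ X) = -X + ⟪X, ξ⟫_ℝ • ξ)
    (hφg : ∀ X Y : V, ⟪φ X, φ Y⟫_ℝ = ⟪X, Y⟫_ℝ - ⟪X, ξ⟫_ℝ * ⟪Y, ξ⟫_ℝ)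
    (A : V →ₗ[ℝ] V) (hA : ∀ X Y : V, ⟪A X, Y⟫_ℝ = ⟪X, A Y⟫_ℝ)
    (k : ℝ) (hk : k ≠ 0)
    (α : ℝ) (hAξ : A ξ = α • ξ)
    (hMaeda : ∀ (X : V) (l : ℝ), ‖X‖ = 1 → ⟪X, ξ⟫_ℝ = 0 → A X = l • X →
      2 * l - α ≠ 0 ∧ A (φ X) = ((α * l + 2) / (2 * l - α)) • φ X) :
    ¬ (∀ X Y : V, ⟪X, ξ⟫_ℝ = 0 → ⟪Y, ξ⟫_ℝ = 0 →
      AT φ A ξ k (φ X) Y = AT φ A ξ k X (φ Y)) :=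
  thm4_hopf_general hdim φ ξ hξ hφφ hφg A hA k α hAξ hMaeda
end

section
/- Let V, g, φ, ξ, η, A, D be as in the context, let k be a nonzero real number, and suppose Aξ = αξ + βU for some real numbers α, β with β ≠ 0 and some unit vector U ∈ D (the non-Hopf case). If A_T^{(k)} is η-skewpure with respect to φ, i.e. A_T^{(k)}(φX, Y) + A_T^{(k)}(X, φY) = 0 for all X, Y ∈ D, then AU = βξ + kU, A(φU) = k·φU, and AZ = kZ for every Z ∈ D orthogonal to both U and φU. (Pointwise shape-operator form established in the non-Hopf case of the proof of Theorem 5.) -/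
open scoped InnerProductSpace

theorem thm5_nonHopf {V : Type*} [NormedAddCommGroup V] [InnerProductSpace ℝ V]
    [FiniteDimensional ℝ V] (hdim : 5 ≤ Module.finrank ℝ V)
    (φ : V →ₗ[ℝ] V) (ξ : V) (hξ : ‖ξ‖ = 1)
    (hφφ : ∀ X : V, φ (φ X) = -X + ⟪X, ξ⟫_ℝ • ξ)
    (hφg : ∀ X Y : V, ⟪φ X, φ Y⟫_ℝ = ⟪X, Y⟫_ℝ - ⟪X, ξ⟫_ℝ * ⟪Y, ξ⟫_ℝ)
    (A : V →ₗ[ℝ] V) (hA : ∀ X Y : V, ⟪A X, Y⟫_ℝ = ⟪X, A Y⟫_ℝ)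
    (k : ℝ) (hk : k ≠ 0)
    (α β : ℝ) (hβ : β ≠ 0) (U : V) (hU : ‖U‖ = 1) (hUξ : ⟪U, ξ⟫_ℝ = 0)
    (hAξ : A ξ = α • ξ + β • U)
    (hskew : ∀ X Y : V, ⟪X, ξ⟫_ℝ = 0 → ⟪Y, ξ⟫_ℝ = 0 →
      AT φ A ξ k (φ X) Y + AT φ A ξ k X (φ Y) = 0) :
    A U = β • ξ + k • U ∧ A (φ U) = k • φ U ∧
      (∀ Z : V, ⟪Z, ξ⟫_ℝ = 0 → ⟪Z, U⟫_ℝ = 0 → ⟪Z, φ U⟫_ℝ = 0 → A Z = k • Z) := by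
  have hξξ : ⟪ξ, ξ⟫_ℝ = 1 := by
    rw [real_inner_self_eq_norm_mul_norm, hξ]; norm_num
  have hUU : ⟪U, U⟫_ℝ = 1 := by
    rw [real_inner_self_eq_norm_mul_norm, hU]; norm_num
  have hUne : U ≠ 0 := by
    intro h; rw [h, norm_zero] at hU; norm_num at hU
  have hφξ : φ ξ = 0 := by
    have h : ⟪φ ξ, φ ξ⟫_ℝ = 0 := by rw [hφg, hξξ]; ring
    exact inner_self_eq_zero.mp h
  have hnφ : ∀ Z : V, ⟪φ Z, ξ⟫_ℝ = 0 := by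
    intro Z
    have h1 : φ (φ (φ Z)) = -(φ Z) + ⟪φ Z, ξ⟫_ℝ • ξ := hφφ (φ Z)
    have h2 : φ (φ (φ Z)) = -(φ Z) := by
      rw [hφφ Z, map_add, map_neg, map_smul, hφξ, smul_zero, add_zero]
    rw [h2] at h1
    have h3 : ⟪φ Z, ξ⟫_ℝ • ξ = 0 := by
      have := h1.symm
      rwa [add_eq_left] at this
    have hξ0 : ξ ≠ 0 := by
      intro h; rw [h, norm_zero] at hξ; norm_num at hξ
    rcases smul_eq_zero.mp h3 with h | h
    · exact h
    · exact absurd h hξ0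
  have hφskew : ∀ X Y : V, ⟪φ X, Y⟫_ℝ = -⟪X, φ Y⟫_ℝ := by
    intro X Y
    have hY' : Y = ⟪Y, ξ⟫_ℝ • ξ - φ (φ Y) := by rw [hφφ Y]; module
    calc ⟪φ X, Y⟫_ℝ = ⟪φ X, ⟪Y, ξ⟫_ℝ • ξ - φ (φ Y)⟫_ℝ := by rw [← hY']
    _ = ⟪Y, ξ⟫_ℝ * ⟪φ X, ξ⟫_ℝ - ⟪φ X, φ (φ Y)⟫_ℝ := by
        rw [inner_sub_right, real_inner_smul_right]
    _ = -⟪X, φ Y⟫_ℝ := by rw [hnφ, hφg, hnφ]; ring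
  have hξφU : ⟪ξ, φ U⟫_ℝ = 0 := by rw [real_inner_comm]; exact hnφ U
  have hφUU : ⟪φ U, U⟫_ℝ = 0 := by
    have h1 := hφskew U U
    have h2 : ⟪U, φ U⟫_ℝ = ⟪φ U, U⟫_ℝ := real_inner_comm _ _
    rw [h2] at h1; linarith
  have hUφU : ⟪U, φ U⟫_ℝ = 0 := by rw [real_inner_comm]; exact hφUU
  have hφUφU : ⟪φ U, φ U⟫_ℝ = 1 := by rw [hφg, hUU, hUξ]; ring
  have hnA : ∀ Z : V, ⟪Z, ξ⟫_ℝ = 0 → ⟪A Z, ξ⟫_ℝ = β * ⟪Z, U⟫_ℝ := by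
    intro Z hZ
    rw [hA Z ξ, hAξ, inner_add_right, real_inner_smul_right, real_inner_smul_right, hZ]
    ring
  have genS : ∀ X Y : V, ⟪X, ξ⟫_ℝ = 0 → ⟪Y, ξ⟫_ℝ = 0 →
      AT φ A ξ k (φ X) Y + AT φ A ξ k X (φ Y) =
        (⟪φ (A (φ X)), A Y⟫_ℝ - ⟪φ (A (A Y)), φ X⟫_ℝ + ⟪φ (A X), A (φ Y)⟫_ℝ
            - ⟪φ (A (A (φ Y))), X⟫_ℝ) • ξ
        - (β * ⟪Y, U⟫_ℝ) • φ (A (φ X)) + (k * (β * ⟪Y, U⟫_ℝ)) • φ (φ X)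
        + (β * ⟪Y, φ U⟫_ℝ) • φ (A X) - (k * (β * ⟪Y, φ U⟫_ℝ)) • φ X
        - (⟪φ (A (φ X)), Y⟫_ℝ - ⟪φ (A Y), φ X⟫_ℝ + ⟪φ (A X), φ Y⟫_ℝ
            - ⟪φ (A (φ Y)), X⟫_ℝ) • (A ξ) := by
    intro X Y hX hY
    have h1 : ⟪A Y, ξ⟫_ℝ = β * ⟪Y, U⟫_ℝ := hnA Y hY
    have h2 : ⟪A (φ Y), ξ⟫_ℝ = -(β * ⟪Y, φ U⟫_ℝ) := by
      rw [hnA (φ Y) (hnφ Y)]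
      have h3 : ⟪φ Y, U⟫_ℝ = -⟪Y, φ U⟫_ℝ := hφskew Y U
      rw [h3]; ring
    simp only [AT, torT, choF, map_sub, map_add, map_smul, h1, h2, hX, hY, hnφ,
      mul_zero, zero_smul, smul_zero, sub_zero, zero_sub, neg_neg, neg_smul]
    module
  have key : ∀ X : V, ⟪X, ξ⟫_ℝ = 0 → ∃ c : ℝ,
      A X = k • X + (β * ⟪X, U⟫_ℝ) • ξ - c • φ U := by
    intro X hX
    have e := hskew X (φ U) hX (hnφ U)
    rw [genS X (φ U) hX (hnφ U)] at e
    rw [hφUU, hφUφU, hAξ] at e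
    have e2 := congrArg φ e
    rw [map_zero] at e2
    simp only [map_add, map_sub, map_smul, map_neg, hφφ, hφξ, hUξ, hX,
      hnA X hX, mul_zero, zero_smul, smul_zero, sub_zero, zero_sub, add_zero,
      zero_add, neg_neg, neg_smul, mul_one, map_zero] at e2
    refine ⟨⟪φ (A (φ X)), φ U⟫_ℝ - ⟪φ (A (φ U)), φ X⟫_ℝ + ⟪φ (A X), -U⟫_ℝ
      - ⟪-φ (A U), X⟫_ℝ, ?_⟩
    have e3 : β • (k • X + (β * ⟪X, U⟫_ℝ) • ξ
        - (⟪φ (A (φ X)), φ U⟫_ℝ - ⟪φ (A (φ U)), φ X⟫_ℝ + ⟪φ (A X), -U⟫_ℝ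
          - ⟪-φ (A U), X⟫_ℝ) • φ U - A X) = 0 := by
      rw [← e2]; module
    rcases smul_eq_zero.mp e3 with h | h
    · exact absurd h hβ
    · exact (sub_eq_zero.mp h).symm
  have hAφU : A (φ U) = k • φ U := by
    have e := hskew U U hUξ hUξ
    rw [genS U U hUξ hUξ] at e
    rw [hUU, hUφU, hAξ] at e
    have e2 := congrArg φ e
    rw [map_zero] at e2
    simp only [map_add, map_sub, map_smul, map_neg, hφφ, hφξ, hUξ, hφUU,
      hnA (φ U) (hnφ U), mul_zero, zero_smul, smul_zero, sub_zero, zero_sub,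
      add_zero, zero_add, neg_neg, neg_smul, mul_one, map_zero] at e2
    have e3 : β • (A (φ U) - k • φ U) = 0 := by rw [← e2]; module
    rcases smul_eq_zero.mp e3 with h | h
    · exact absurd h hβ
    · exact sub_eq_zero.mp h
  have key2 : ∀ X : V, ⟪X, ξ⟫_ℝ = 0 → A X = k • X + (β * ⟪X, U⟫_ℝ) • ξ := by
    intro X hX
    obtain ⟨c, hc⟩ := key X hX
    have h5 : ⟪A X, φ U⟫_ℝ = ⟪X, A (φ U)⟫_ℝ := hA X (φ U)
    rw [hc, hAφU] at h5
    simp only [inner_sub_left, inner_add_left, real_inner_smul_left,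
      real_inner_smul_right, hξφU, hφUφU] at h5
    have hc0 : c = 0 := by
      have h6 : ⟪X, φ U⟫_ℝ = ⟪φ U, X⟫_ℝ := real_inner_comm _ _
      rw [h6] at h5; linarith
    rw [hc, hc0]; module
  refine ⟨?_, hAφU, ?_⟩
  · rw [key2 U hUξ, hUU]; module
  · intro Z hZξ hZU _
    rw [key2 Z hZξ, hZU]; module
end

section
/- Let V, g, φ, ξ, η, A, D be as in the context, let k be a nonzero real number, suppose Aξ = αξ for some real number α (the Hopf case) and that A satisfies the Maeda relations for α. If A_T^{(k)} is η-skewpure with respect to φ, i.e. A_T^{(k)}(φX, Y) + A_T^{(k)}(X, φY) = 0 for all X, Y ∈ D, then A ∘ φ = φ ∘ A. (Theorem 5, Hopf case.) -/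
/-!
For a unit eigenvector `X ∈ D` with `A X = l X`, Maeda's relation gives `A (φ X) = μ φ X` with
`μ = (α l + 2)/(2 l - α)`, and expanding the torsion operators shows
`A_T(φ X, X) + A_T(X, φ X) = (μ² - l²) ξ`. Skew-purity forces `μ = ± l`, and `μ = -l` would give
`2 l² + 2 = 0`; so `A φ = φ A` on an eigenbasis of `A` on `D`, while both sides vanish on `ξ`.
-/

open scoped InnerProductSpace

section

variable {V : Type*} [NormedAddCommGroup V] [InnerProductSpace ℝ V]

theorem LinearMap.IsSymmetric.apply_mem_orthogonal_singleton {A : V →ₗ[ℝ] V}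
    (hA : A.IsSymmetric) {ξ : V} {α : ℝ} (hAξ : A ξ = α • ξ) {x : V} (hx : x ∈ (ℝ ∙ ξ)ᗮ) :
    A x ∈ (ℝ ∙ ξ)ᗮ := by
  rw [Submodule.mem_orthogonal_singleton_iff_inner_left] at hx ⊢
  rw [hA, hAξ, inner_smul_right, hx, mul_zero]

theorem LinearMap.eqOn_of_eigenvectors [FiniteDimensional ℝ V] {A : V →ₗ[ℝ] V}
    (hA : A.IsSymmetric) {K : Submodule ℝ V} (hK : ∀ x ∈ K, A x ∈ K) {f g : V →ₗ[ℝ] V}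
    (hfg : ∀ (X : V) (l : ℝ), ‖X‖ = 1 → X ∈ K → A X = l • X → f X = g X) :
    Set.EqOn f g K := by
  have hAK := hA.restrict_invariant hK
  let b := hAK.eigenvectorBasis rfl
  have hcomp : f ∘ₗ K.subtype = g ∘ₗ K.subtype := by
    refine b.toBasis.ext fun i => hfg (b i) (hAK.eigenvalues rfl i) (b.orthonormal.1 i) (b i).2 ?_
    exact congrArg Subtype.val (hAK.apply_eigenvectorBasis rfl i)
  exact fun x hx => LinearMap.congr_fun hcomp ⟨x, hx⟩

theorem mul_add_two_div_ne_neg {α l : ℝ} (h : 2 * l - α ≠ 0) :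
    (α * l + 2) / (2 * l - α) ≠ -l := by
  rw [Ne, div_eq_iff h]
  nlinarith [sq_nonneg l]

theorem phi_xi_eq_zero {φ : V →ₗ[ℝ] V} {ξ : V} (hξ : ‖ξ‖ = 1)
    (hφg : ∀ X Y : V, ⟪φ X, φ Y⟫_ℝ = ⟪X, Y⟫_ℝ - ⟪X, ξ⟫_ℝ * ⟪Y, ξ⟫_ℝ) : φ ξ = 0 := by
  rw [← inner_self_eq_zero (𝕜 := ℝ), hφg, real_inner_self_eq_norm_sq, hξ]
  ring

theorem inner_phi_xi_eq_zero {φ : V →ₗ[ℝ] V} {ξ : V} (hξ : ξ ≠ 0)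
    (hφφ : ∀ X : V, φ (φ X) = -X + ⟪X, ξ⟫_ℝ • ξ) (hφξ : φ ξ = 0) (X : V) : ⟪φ X, ξ⟫_ℝ = 0 := by
  have h : φ (φ (φ X)) = -φ X + ⟪φ X, ξ⟫_ℝ • ξ := hφφ (φ X)
  rw [hφφ X, map_add, map_neg, map_smul, hφξ, smul_zero, add_zero, left_eq_add] at h
  exact (smul_eq_zero.mp h).resolve_right hξ

theorem AT_phi_add_AT_phi_of_eigenvector {φ A : V →ₗ[ℝ] V} {ξ X : V} {k α l μ : ℝ}
    (hφX : φ (φ X) = -X) (hφgX : ⟪φ X, φ X⟫_ℝ = ⟪X, X⟫_ℝ) (hXξ : ⟪X, ξ⟫_ℝ = 0)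
    (hφXξ : ⟪φ X, ξ⟫_ℝ = 0) (hAξ : A ξ = α • ξ) (hAX : A X = l • X)
    (hAφX : A (φ X) = μ • φ X) :
    AT φ A ξ k (φ X) X + AT φ A ξ k X (φ X) = (⟪X, X⟫_ℝ * (μ ^ 2 - l ^ 2)) • ξ := by
  simp only [AT, torT, choF, hAφX, hAX, map_smul, map_sub, hφX, hAξ, inner_smul_left,
    inner_smul_right, inner_neg_left, hφgX, hXξ, hφXξ, conj_trivial, smul_neg, mul_zero,
    zero_smul, sub_zero, neg_zero]
  match_scalars
  ring

theorem apply_phi_eq_smul_of_AT_skew {φ A : V →ₗ[ℝ] V} {ξ X : V} {k α l : ℝ} (hξ : ξ ≠ 0)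
    (hX : X ≠ 0) (hφX : φ (φ X) = -X) (hφgX : ⟪φ X, φ X⟫_ℝ = ⟪X, X⟫_ℝ) (hXξ : ⟪X, ξ⟫_ℝ = 0)
    (hφXξ : ⟪φ X, ξ⟫_ℝ = 0) (hAξ : A ξ = α • ξ) (hAX : A X = l • X) (hne : 2 * l - α ≠ 0)
    (hAφX : A (φ X) = ((α * l + 2) / (2 * l - α)) • φ X)
    (hskew : AT φ A ξ k (φ X) X + AT φ A ξ k X (φ X) = 0) :
    A (φ X) = l • φ X := by
  rw [AT_phi_add_AT_phi_of_eigenvector hφX hφgX hXξ hφXξ hAξ hAX hAφX, smul_eq_zero,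
    or_iff_left hξ, mul_eq_zero, or_iff_right (inner_self_ne_zero.mpr hX), sub_eq_zero,
    sq_eq_sq_iff_eq_or_eq_neg, or_iff_left (mul_add_two_div_ne_neg hne)] at hskew
  rw [hAφX, hskew]

end

theorem thm5_hopf_general {V : Type*} [NormedAddCommGroup V] [InnerProductSpace ℝ V]
    [FiniteDimensional ℝ V]
    (φ : V →ₗ[ℝ] V) (ξ : V) (hξ : ‖ξ‖ = 1)
    (hφφ : ∀ X : V, φ (φ X) = -X + ⟪X, ξ⟫_ℝ • ξ)
    (hφg : ∀ X Y : V, ⟪φ X, φ Y⟫_ℝ = ⟪X, Y⟫_ℝ - ⟪X, ξ⟫_ℝ * ⟪Y, ξ⟫_ℝ)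
    (A : V →ₗ[ℝ] V) (hA : ∀ X Y : V, ⟪A X, Y⟫_ℝ = ⟪X, A Y⟫_ℝ)
    (k : ℝ)
    (α : ℝ) (hAξ : A ξ = α • ξ)
    (hMaeda : ∀ (X : V) (l : ℝ), ‖X‖ = 1 → ⟪X, ξ⟫_ℝ = 0 → A X = l • X →
      2 * l - α ≠ 0 ∧ A (φ X) = ((α * l + 2) / (2 * l - α)) • φ X)
    (hskew : ∀ X Y : V, ⟪X, ξ⟫_ℝ = 0 → ⟪Y, ξ⟫_ℝ = 0 →
      AT φ A ξ k (φ X) Y + AT φ A ξ k X (φ Y) = 0) :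
    ∀ X : V, A (φ X) = φ (A X) := by
  have hξ0 : ξ ≠ 0 := norm_ne_zero_iff.mp (hξ ▸ one_ne_zero)
  have hφξ : φ ξ = 0 := phi_xi_eq_zero hξ hφg
  suffices A ∘ₗ φ = φ ∘ₗ A from LinearMap.congr_fun this
  refine LinearMap.ext_on_codisjoint
    (Submodule.isCompl_orthogonal (K := ℝ ∙ ξ)).codisjoint
    (LinearMap.eqOn_span' (Set.eqOn_singleton.mpr ?_))
    (LinearMap.eqOn_of_eigenvectors hA (fun _ => LinearMap.IsSymmetric.apply_mem_orthogonal_singleton hA hAξ) ?_)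
  · simp only [LinearMap.comp_apply, hφξ, hAξ, map_smul, map_zero, smul_zero]
  intro X l hX hXD hAX
  rw [Submodule.mem_orthogonal_singleton_iff_inner_left] at hXD
  obtain ⟨hne, hAφX⟩ := hMaeda X l hX hXD hAX
  have hφX : φ (φ X) = -X := by rw [hφφ, hXD, zero_smul, add_zero]
  have hφgX : ⟪φ X, φ X⟫_ℝ = ⟪X, X⟫_ℝ := by rw [hφg, hXD, mul_zero, sub_zero]
  rw [LinearMap.comp_apply, LinearMap.comp_apply, hAX, map_smul]
  exact apply_phi_eq_smul_of_AT_skew hξ0 (norm_ne_zero_iff.mp (hX ▸ one_ne_zero)) hφX hφgX hXD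
    (inner_phi_xi_eq_zero hξ0 hφφ hφξ X) hAξ hAX hne hAφX (hskew X X hXD hXD)

theorem thm5_hopf {V : Type*} [NormedAddCommGroup V] [InnerProductSpace ℝ V]
    [FiniteDimensional ℝ V] (hdim : 5 ≤ Module.finrank ℝ V)
    (φ : V →ₗ[ℝ] V) (ξ : V) (hξ : ‖ξ‖ = 1)
    (hφφ : ∀ X : V, φ (φ X) = -X + ⟪X, ξ⟫_ℝ • ξ)
    (hφg : ∀ X Y : V, ⟪φ X, φ Y⟫_ℝ = ⟪X, Y⟫_ℝ - ⟪X, ξ⟫_ℝ * ⟪Y, ξ⟫_ℝ)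
    (A : V →ₗ[ℝ] V) (hA : ∀ X Y : V, ⟪A X, Y⟫_ℝ = ⟪X, A Y⟫_ℝ)
    (k : ℝ) (hk : k ≠ 0)
    (α : ℝ) (hAξ : A ξ = α • ξ)
    (hMaeda : ∀ (X : V) (l : ℝ), ‖X‖ = 1 → ⟪X, ξ⟫_ℝ = 0 → A X = l • X →
      2 * l - α ≠ 0 ∧ A (φ X) = ((α * l + 2) / (2 * l - α)) • φ X)
    (hskew : ∀ X Y : V, ⟪X, ξ⟫_ℝ = 0 → ⟪Y, ξ⟫_ℝ = 0 →
      AT φ A ξ k (φ X) Y + AT φ A ξ k X (φ Y) = 0) :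
    ∀ X : V, A (φ X) = φ (A X) :=
  thm5_hopf_general φ ξ hξ hφφ hφg A hA k α hAξ hMaeda hskew
end

section
/- Let V, g, φ, ξ, η, A, D be as in the context and let k be a nonzero real number. If Aξ = αξ for some real number α and A ∘ φ = φ ∘ A (the pointwise condition characterizing type (A) real hypersurfaces), then A_T^{(k)} is η-skewpure with respect to φ: A_T^{(k)}(φX, Y) + A_T^{(k)}(X, φY) = 0 for all X, Y ∈ D. (Converse direction of Theorem 5.) -/
open scoped InnerProductSpace

theorem thm5_converse {V : Type*} [NormedAddCommGroup V] [InnerProductSpace ℝ V]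
    [FiniteDimensional ℝ V] (hdim : 5 ≤ Module.finrank ℝ V)
    (φ : V →ₗ[ℝ] V) (ξ : V) (hξ : ‖ξ‖ = 1)
    (hφφ : ∀ X : V, φ (φ X) = -X + ⟪X, ξ⟫_ℝ • ξ)
    (hφg : ∀ X Y : V, ⟪φ X, φ Y⟫_ℝ = ⟪X, Y⟫_ℝ - ⟪X, ξ⟫_ℝ * ⟪Y, ξ⟫_ℝ)
    (A : V →ₗ[ℝ] V) (hA : ∀ X Y : V, ⟪A X, Y⟫_ℝ = ⟪X, A Y⟫_ℝ)
    (k : ℝ) (hk : k ≠ 0)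
    (α : ℝ) (hAξ : A ξ = α • ξ)
    (hcomm : ∀ X : V, A (φ X) = φ (A X)) :
    ∀ X Y : V, ⟪X, ξ⟫_ℝ = 0 → ⟪Y, ξ⟫_ℝ = 0 →
      AT φ A ξ k (φ X) Y + AT φ A ξ k X (φ Y) = 0 := by

  have hξξ : ⟪ξ, ξ⟫_ℝ = (1:ℝ) := by
    rw [real_inner_self_eq_norm_sq, hξ]; norm_num
  have hφξ : φ ξ = 0 := by
    have h := hφg ξ ξ
    rw [hξξ] at h
    have h0 : ⟪φ ξ, φ ξ⟫_ℝ = 0 := by rw [h]; ring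
    exact inner_self_eq_zero.mp h0
  have hηφ : ∀ Z : V, ⟪φ Z, ξ⟫_ℝ = 0 := by
    intro Z
    have h1 := hφφ (φ Z)
    have h2 : φ (φ (φ Z)) = - φ Z := by
      rw [hφφ Z]; simp [hφξ]
    rw [h2] at h1
    have h3 : ⟪φ Z, ξ⟫_ℝ • ξ = 0 := by linear_combination (norm := module) -h1
    have hξ0 : ξ ≠ 0 := by intro h; rw [h] at hξ; simp at hξ
    rcases smul_eq_zero.mp h3 with h | h
    · exact h
    · exact absurd h hξ0
  have hskew : ∀ X Y : V, ⟪φ X, Y⟫_ℝ = -⟪X, φ Y⟫_ℝ := by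
    intro X Y
    have hY : Y = -φ (φ Y) + ⟪Y, ξ⟫_ℝ • ξ := by
      linear_combination (norm := module) hφφ Y
    calc ⟪φ X, Y⟫_ℝ = ⟪φ X, -φ (φ Y) + ⟪Y, ξ⟫_ℝ • ξ⟫_ℝ := by rw [← hY]
    _ = -⟪φ X, φ (φ Y)⟫_ℝ + ⟪Y, ξ⟫_ℝ * ⟪φ X, ξ⟫_ℝ := by
        rw [inner_add_right, inner_neg_right, real_inner_smul_right]
    _ = -⟪X, φ Y⟫_ℝ := by rw [hφg, hηφ, hηφ]; ring
  have hAD : ∀ Z : V, ⟪Z, ξ⟫_ℝ = 0 → ⟪A Z, ξ⟫_ℝ = 0 := by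
    intro Z hZ
    rw [hA, hAξ, real_inner_smul_right, hZ, mul_zero]
  have hT : ∀ X Y : V, ⟪X, ξ⟫_ℝ = 0 → ⟪Y, ξ⟫_ℝ = 0 →
      torT φ A ξ k X Y = (2 * ⟪φ (A X), Y⟫_ℝ) • ξ := by
    intro X Y hX hY
    have h1 : ⟪φ (A Y), X⟫_ℝ = -⟪φ (A X), Y⟫_ℝ := by
      rw [hskew, hA, hcomm, real_inner_comm]
    unfold torT choF
    rw [hX, hY, h1]
    module
  intro X Y hX hY
  have hφX : ⟪φ X, ξ⟫_ℝ = 0 := hηφ X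
  have hφY : ⟪φ Y, ξ⟫_ℝ = 0 := hηφ Y
  have hAY : ⟪A Y, ξ⟫_ℝ = 0 := hAD Y hY
  have hAφY : ⟪A (φ Y), ξ⟫_ℝ = 0 := hAD _ hφY
  have hkeyX : φ (A (φ X)) = -(A X) := by
    rw [hcomm, hφφ, hAD X hX]; simp
  unfold AT
  rw [hT (φ X) (A Y) hφX hAY, hT X (A (φ Y)) hX hAφY,
      hT (φ X) Y hφX hY, hT X (φ Y) hX hφY,
      map_smul, map_smul, hAξ]
  have s1 : ⟪φ (A (φ X)), A Y⟫_ℝ = -⟪A X, A Y⟫_ℝ := by rw [hkeyX, inner_neg_left]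
  have s2 : ⟪φ (A (φ X)), Y⟫_ℝ = -⟪A X, Y⟫_ℝ := by rw [hkeyX, inner_neg_left]
  have s3 : ⟪φ (A X), A (φ Y)⟫_ℝ = ⟪A X, A Y⟫_ℝ := by
    rw [hcomm, hφg, hAD X hX]; ring
  have s4 : ⟪φ (A X), φ Y⟫_ℝ = ⟪A X, Y⟫_ℝ := by
    rw [hφg, hAD X hX]; ring
  rw [s1, s2, s3, s4]
  module
end

section
/- Let V, g, φ, ξ, η, A, D be as in the context, let k be a nonzero real number, and suppose Aξ = αξ + βU for some real numbers α, β with β ≠ 0 and some unit vector U ∈ D (the non-Hopf case). If A_T^{(k)}(φX, Y) = φ(A_T^{(k)}(X, Y)) for all X, Y ∈ D, then A(φU) = 0, AU = βξ, and AZ = 0 for every Z ∈ D orthogonal to both U and φU; in particular g(AX, Y) = 0 for all X, Y ∈ D (the pointwise ruled condition). (Theorem 6, non-Hopf case.) -/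
open scoped InnerProductSpace

/-!
On `D` the torsion is `T_X Y = S(X, Y) ξ` for the alternating form
`S(X, Y) = g(φAX, Y) − g(φAY, X)`. Pairing `A_T(φX, Y) = φ A_T(X, Y)` with `Z ∈ D` gives a
scalar identity in which the `k`-terms cancel (`inner_AT_apply_eq`). For `Y ⊥ U` and `Z = φU`
only `β S(X, Y)` survives, and an alternating form that vanishes on `D × (D ∩ U^⊥)` vanishes on
`D × D`. Then `S(Z, φX) = 0` says `g(φAφX, Z) = g(AX, Z)`, and the identity for `Y = U` becomes
`2β g(AX, Z) = 0`. So `A` maps `D` into `ℝξ`, where `g(AX, ξ) = g(X, Aξ) = β g(X, U)` fixes it.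
-/

section

variable {V : Type*} [NormedAddCommGroup V] [InnerProductSpace ℝ V]

structure IsAlmostContactMetric_s17 (φ : V →ₗ[ℝ] V) (ξ : V) : Prop where
  norm_eq_one : ‖ξ‖ = 1
  apply_apply : ∀ X, φ (φ X) = -X + ⟪X, ξ⟫_ℝ • ξ
  inner_apply_apply : ∀ X Y, ⟪φ X, φ Y⟫_ℝ = ⟪X, Y⟫_ℝ - ⟪X, ξ⟫_ℝ * ⟪Y, ξ⟫_ℝ

namespace IsAlmostContactMetric_s17

variable {φ : V →ₗ[ℝ] V} {ξ : V}

theorem inner_self_eq_one (h : IsAlmostContactMetric_s17 φ ξ) : ⟪ξ, ξ⟫_ℝ = 1 := by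
  rw [real_inner_self_eq_norm_mul_norm, h.norm_eq_one, one_mul]

theorem apply_eq_zero (h : IsAlmostContactMetric_s17 φ ξ) : φ ξ = 0 := by
  have := h.inner_apply_apply ξ ξ
  rw [h.inner_self_eq_one, one_mul, sub_self] at this
  exact inner_self_eq_zero.mp this

theorem inner_apply_eq_zero (h : IsAlmostContactMetric_s17 φ ξ) (X : V) : ⟪φ X, ξ⟫_ℝ = 0 := by
  have h3 : φ (φ (φ X)) = -φ X + ⟪φ X, ξ⟫_ℝ • ξ := h.apply_apply (φ X)
  rw [h.apply_apply X, map_add, map_neg, map_smul, h.apply_eq_zero, smul_zero, add_zero,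
    left_eq_add, smul_eq_zero] at h3
  have hξ : ξ ≠ 0 := norm_ne_zero_iff.mp (by simp [h.norm_eq_one])
  exact h3.resolve_right hξ

theorem inner_apply_left (h : IsAlmostContactMetric_s17 φ ξ) (X Y : V) :
    ⟪φ X, Y⟫_ℝ = -⟪X, φ Y⟫_ℝ := by
  have := h.inner_apply_apply X (φ Y)
  rw [h.apply_apply Y, inner_add_right, inner_neg_right, real_inner_smul_right,
    h.inner_apply_eq_zero, h.inner_apply_eq_zero, mul_zero, mul_zero, add_zero, sub_zero] at this
  linarith

theorem inner_apply_self (h : IsAlmostContactMetric_s17 φ ξ) (X : V) : ⟪φ X, X⟫_ℝ = 0 := by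
  have := h.inner_apply_left X X
  rw [real_inner_comm (φ X) X] at this
  linarith

end IsAlmostContactMetric_s17

/-- For `X, Y ∈ D` the torsion is `T^{(k)}_X Y = torsionForm φ A X Y • ξ`. -/
noncomputable def torsionForm (φ A : V →ₗ[ℝ] V) : LinearMap.BilinForm ℝ V :=
  (innerₗ V).comp (φ ∘ₗ A) - ((innerₗ V).comp (φ ∘ₗ A)).flip

@[simp]
theorem torsionForm_apply (φ A : V →ₗ[ℝ] V) (X Y : V) :
    torsionForm φ A X Y = ⟪φ (A X), Y⟫_ℝ - ⟪φ (A Y), X⟫_ℝ :=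
  rfl

theorem torsionForm_isAlt (φ A : V →ₗ[ℝ] V) : (torsionForm φ A).IsAlt :=
  fun _ => sub_self _

variable {φ A : V →ₗ[ℝ] V} {ξ : V} {k : ℝ}

theorem torT_of_inner_eq_zero {X : V} (hX : ⟪X, ξ⟫_ℝ = 0) (W : V) :
    torT φ A ξ k X W =
      torsionForm φ A X W • ξ - ⟪W, ξ⟫_ℝ • φ (A X) + (k * ⟪W, ξ⟫_ℝ) • φ X := by
  simp only [torT, choF, torsionForm_apply, hX, mul_zero, zero_smul, sub_zero]
  module

theorem AT_of_inner_eq_zero {X Y : V} (hX : ⟪X, ξ⟫_ℝ = 0) (hY : ⟪Y, ξ⟫_ℝ = 0) :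
    AT φ A ξ k X Y = torT φ A ξ k X (A Y) - torsionForm φ A X Y • A ξ := by
  rw [AT, torT_of_inner_eq_zero hX Y, hY, zero_smul, mul_zero, zero_smul, sub_zero, add_zero,
    map_smul]

theorem inner_AT_apply_eq (h : IsAlmostContactMetric_s17 φ ξ) {X Y Z : V} (hX : ⟪X, ξ⟫_ℝ = 0)
    (hY : ⟪Y, ξ⟫_ℝ = 0) (hZ : ⟪Z, ξ⟫_ℝ = 0)
    (hXY : AT φ A ξ k (φ X) Y = φ (AT φ A ξ k X Y)) :
    -(⟪A Y, ξ⟫_ℝ * ⟪φ (A (φ X)), Z⟫_ℝ) - torsionForm φ A (φ X) Y * ⟪A ξ, Z⟫_ℝ =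
      ⟪A Y, ξ⟫_ℝ * ⟪A X, Z⟫_ℝ - torsionForm φ A X Y * ⟪φ (A ξ), Z⟫_ℝ := by
  have hξZ : ⟪ξ, Z⟫_ℝ = 0 := by rwa [real_inner_comm]
  have := congrArg (⟪·, Z⟫_ℝ) hXY
  simp only [AT_of_inner_eq_zero (h.inner_apply_eq_zero X) hY, AT_of_inner_eq_zero hX hY,
    torT_of_inner_eq_zero (h.inner_apply_eq_zero X), torT_of_inner_eq_zero hX, map_sub,
    map_add, map_smul, h.apply_eq_zero, h.apply_apply, inner_sub_left, inner_add_left,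
    inner_neg_left, real_inner_smul_left, hξZ, hX, smul_zero, inner_zero_left] at this
  linarith

theorem LinearMap.BilinForm.IsAlt.eq_zero_of_inner_eq_zero {S : LinearMap.BilinForm ℝ V}
    (hS : S.IsAlt) {D : Submodule ℝ V} {U : V} (hUD : U ∈ D) (hU : U ≠ 0)
    (h : ∀ X ∈ D, ∀ Y ∈ D, ⟪Y, U⟫_ℝ = 0 → S X Y = 0) {X Y : V} (hX : X ∈ D) (hY : Y ∈ D) :
    S X Y = 0 := by
  have hUU : ⟪U, U⟫_ℝ ≠ 0 := inner_self_ne_zero.mpr hU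
  have key : ∀ X ∈ D, ∀ Y ∈ D, ⟪U, U⟫_ℝ * S X Y = ⟪Y, U⟫_ℝ * S X U := by
    intro X hX Y hY
    have := h X hX (⟪U, U⟫_ℝ • Y - ⟪Y, U⟫_ℝ • U) (D.sub_mem (D.smul_mem _ hY) (D.smul_mem _ hUD))
      (by rw [inner_sub_left, real_inner_smul_left, real_inner_smul_left, mul_comm, sub_self])
    rwa [map_sub, map_smul, map_smul, smul_eq_mul, smul_eq_mul, sub_eq_zero] at this
  have hXU : S X U = 0 := by
    have := key U hUD X hX
    rw [hS.self_eq_zero, mul_zero, mul_eq_zero] at this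
    exact hS.eq_iff.mp (this.resolve_left hUU)
  have := key X hX Y hY
  rw [hXU, mul_zero, mul_eq_zero] at this
  exact this.resolve_left hUU

theorem eq_inner_smul_of_forall_inner_eq_zero {ξ W : V} (hξ : ‖ξ‖ = 1)
    (h : ∀ Z : V, ⟪Z, ξ⟫_ℝ = 0 → ⟪W, Z⟫_ℝ = 0) : W = ⟪W, ξ⟫_ℝ • ξ := by
  have hξξ : ⟪ξ, ξ⟫_ℝ = 1 := by rw [real_inner_self_eq_norm_mul_norm, hξ, one_mul]
  set Z := W - ⟪W, ξ⟫_ℝ • ξ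
  have hZξ : ⟪Z, ξ⟫_ℝ = 0 := by rw [inner_sub_left, real_inner_smul_left, hξξ, mul_one, sub_self]
  have hZZ : ⟪Z, Z⟫_ℝ = 0 := by
    rw [inner_sub_left, real_inner_smul_left, real_inner_comm Z ξ, hZξ, mul_zero, sub_zero]
    exact h Z hZξ
  exact sub_eq_zero.mp (inner_self_eq_zero.mp hZZ)

section NonHopf

variable {α β : ℝ} {U : V}

theorem torsionForm_eq_zero_of_inner_eq_zero (h : IsAlmostContactMetric_s17 φ ξ)
    (hA : A.IsSymmetric) (hAξ : A ξ = α • ξ + β • U) (hβ : β ≠ 0) (hU : ‖U‖ = 1)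
    (hUξ : ⟪U, ξ⟫_ℝ = 0) {X Y : V} (hX : ⟪X, ξ⟫_ℝ = 0) (hY : ⟪Y, ξ⟫_ℝ = 0)
    (hYU : ⟪Y, U⟫_ℝ = 0) (hXY : AT φ A ξ k (φ X) Y = φ (AT φ A ξ k X Y)) :
    torsionForm φ A X Y = 0 := by
  have hAY : ⟪A Y, ξ⟫_ℝ = 0 := by
    rw [hA, hAξ, inner_add_right, real_inner_smul_right, real_inner_smul_right, hY, hYU]
    ring
  have hφU : ⟪φ U, φ U⟫_ℝ = 1 := by
    rw [h.inner_apply_apply, hUξ, real_inner_self_eq_norm_mul_norm, hU]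
    ring
  have key := inner_AT_apply_eq h hX hY (h.inner_apply_eq_zero U) hXY
  rw [hAY, hAξ, map_add, map_smul, map_smul, h.apply_eq_zero, smul_zero, zero_add,
    inner_add_left, real_inner_smul_left, real_inner_smul_left, real_inner_smul_left,
    real_inner_comm (φ U) ξ, h.inner_apply_eq_zero, real_inner_comm (φ U) U, h.inner_apply_self,
    hφU] at key
  have : β * torsionForm φ A X Y = 0 := by linarith
  exact (mul_eq_zero.mp this).resolve_left hβ

theorem torsionForm_eq_zero (h : IsAlmostContactMetric_s17 φ ξ) (hA : A.IsSymmetric)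
    (hAξ : A ξ = α • ξ + β • U) (hβ : β ≠ 0) (hU : ‖U‖ = 1) (hUξ : ⟪U, ξ⟫_ℝ = 0)
    (hphi : ∀ X Y : V, ⟪X, ξ⟫_ℝ = 0 → ⟪Y, ξ⟫_ℝ = 0 →
      AT φ A ξ k (φ X) Y = φ (AT φ A ξ k X Y))
    {X Y : V} (hX : ⟪X, ξ⟫_ℝ = 0) (hY : ⟪Y, ξ⟫_ℝ = 0) :
    torsionForm φ A X Y = 0 := by
  have mem {v : V} : v ∈ (ℝ ∙ ξ)ᗮ ↔ ⟪v, ξ⟫_ℝ = 0 :=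
    Submodule.mem_orthogonal_singleton_iff_inner_left
  have hU0 : U ≠ 0 := norm_ne_zero_iff.mp (by simp [hU])
  refine (torsionForm_isAlt φ A).eq_zero_of_inner_eq_zero (mem.mpr hUξ) hU0
    (fun X hX Y hY hYU => ?_) (mem.mpr hX) (mem.mpr hY)
  exact torsionForm_eq_zero_of_inner_eq_zero h hA hAξ hβ hU hUξ (mem.mp hX) (mem.mp hY) hYU
    (hphi X Y (mem.mp hX) (mem.mp hY))

theorem inner_A_apply_eq_zero (h : IsAlmostContactMetric_s17 φ ξ) (hA : A.IsSymmetric)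
    (hAξ : A ξ = α • ξ + β • U) (hβ : β ≠ 0) (hU : ‖U‖ = 1) (hUξ : ⟪U, ξ⟫_ℝ = 0)
    (hphi : ∀ X Y : V, ⟪X, ξ⟫_ℝ = 0 → ⟪Y, ξ⟫_ℝ = 0 →
      AT φ A ξ k (φ X) Y = φ (AT φ A ξ k X Y))
    {X Z : V} (hX : ⟪X, ξ⟫_ℝ = 0) (hZ : ⟪Z, ξ⟫_ℝ = 0) :
    ⟪A X, Z⟫_ℝ = 0 := by
  have hS {X Y : V} (hX : ⟪X, ξ⟫_ℝ = 0) (hY : ⟪Y, ξ⟫_ℝ = 0) :=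
    torsionForm_eq_zero h hA hAξ hβ hU hUξ hphi hX hY
  have hAU : ⟪A U, ξ⟫_ℝ = β := by
    rw [hA, hAξ, inner_add_right, real_inner_smul_right, real_inner_smul_right, hUξ,
      real_inner_self_eq_norm_mul_norm, hU]
    ring
  have hφAφ : ⟪φ (A (φ X)), Z⟫_ℝ = ⟪A X, Z⟫_ℝ := by
    have := hS hZ (h.inner_apply_eq_zero X)
    rw [torsionForm_apply, h.inner_apply_apply, hX, mul_zero, sub_zero, hA, real_inner_comm,
      sub_eq_zero] at this
    exact this.symm
  have key := inner_AT_apply_eq h hX hUξ hZ (hphi X U hX hUξ)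
  rw [hAU, hS (h.inner_apply_eq_zero X) hUξ, hS hX hUξ, hφAφ] at key
  have : β * ⟪A X, Z⟫_ℝ = 0 := by linarith
  exact (mul_eq_zero.mp this).resolve_left hβ

theorem A_apply_eq_smul (h : IsAlmostContactMetric_s17 φ ξ) (hA : A.IsSymmetric)
    (hAξ : A ξ = α • ξ + β • U) (hβ : β ≠ 0) (hU : ‖U‖ = 1) (hUξ : ⟪U, ξ⟫_ℝ = 0)
    (hphi : ∀ X Y : V, ⟪X, ξ⟫_ℝ = 0 → ⟪Y, ξ⟫_ℝ = 0 →
      AT φ A ξ k (φ X) Y = φ (AT φ A ξ k X Y))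
    {X : V} (hX : ⟪X, ξ⟫_ℝ = 0) :
    A X = (β * ⟪X, U⟫_ℝ) • ξ := by
  rw [eq_inner_smul_of_forall_inner_eq_zero h.norm_eq_one
      (fun Z hZ => inner_A_apply_eq_zero h hA hAξ hβ hU hUξ hphi hX hZ),
    hA, hAξ, inner_add_right, real_inner_smul_right, real_inner_smul_right, hX, mul_zero, zero_add]

end NonHopf

end

theorem thm6_nonHopf_general {V : Type*} [NormedAddCommGroup V] [InnerProductSpace ℝ V]
    (φ : V →ₗ[ℝ] V) (ξ : V) (hξ : ‖ξ‖ = 1)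
    (hφφ : ∀ X : V, φ (φ X) = -X + ⟪X, ξ⟫_ℝ • ξ)
    (hφg : ∀ X Y : V, ⟪φ X, φ Y⟫_ℝ = ⟪X, Y⟫_ℝ - ⟪X, ξ⟫_ℝ * ⟪Y, ξ⟫_ℝ)
    (A : V →ₗ[ℝ] V) (hA : ∀ X Y : V, ⟪A X, Y⟫_ℝ = ⟪X, A Y⟫_ℝ)
    (k : ℝ)
    (α β : ℝ) (hβ : β ≠ 0) (U : V) (hU : ‖U‖ = 1) (hUξ : ⟪U, ξ⟫_ℝ = 0)
    (hAξ : A ξ = α • ξ + β • U)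
    (hphi : ∀ X Y : V, ⟪X, ξ⟫_ℝ = 0 → ⟪Y, ξ⟫_ℝ = 0 →
      AT φ A ξ k (φ X) Y = φ (AT φ A ξ k X Y)) :
    A (φ U) = 0 ∧ A U = β • ξ ∧
      (∀ Z : V, ⟪Z, ξ⟫_ℝ = 0 → ⟪Z, U⟫_ℝ = 0 → ⟪Z, φ U⟫_ℝ = 0 → A Z = 0) ∧
      (∀ X Y : V, ⟪X, ξ⟫_ℝ = 0 → ⟪Y, ξ⟫_ℝ = 0 → ⟪A X, Y⟫_ℝ = 0) := by
  have h : IsAlmostContactMetric_s17 φ ξ := ⟨hξ, hφφ, hφg⟩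
  have hAD : ∀ X : V, ⟪X, ξ⟫_ℝ = 0 → A X = (β * ⟪X, U⟫_ℝ) • ξ :=
    fun X hX => A_apply_eq_smul h hA hAξ hβ hU hUξ hphi hX
  refine ⟨?_, ?_, fun Z hZ hZU _ => ?_,
    fun X Y hX hY => inner_A_apply_eq_zero h hA hAξ hβ hU hUξ hphi hX hY⟩
  · rw [hAD _ (h.inner_apply_eq_zero U), h.inner_apply_self, mul_zero, zero_smul]
  · rw [hAD _ hUξ, real_inner_self_eq_norm_mul_norm, hU, mul_one, mul_one]
  · rw [hAD _ hZ, hZU, mul_zero, zero_smul]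

theorem thm6_nonHopf {V : Type*} [NormedAddCommGroup V] [InnerProductSpace ℝ V]
    [FiniteDimensional ℝ V] (hdim : 5 ≤ Module.finrank ℝ V)
    (φ : V →ₗ[ℝ] V) (ξ : V) (hξ : ‖ξ‖ = 1)
    (hφφ : ∀ X : V, φ (φ X) = -X + ⟪X, ξ⟫_ℝ • ξ)
    (hφg : ∀ X Y : V, ⟪φ X, φ Y⟫_ℝ = ⟪X, Y⟫_ℝ - ⟪X, ξ⟫_ℝ * ⟪Y, ξ⟫_ℝ)
    (A : V →ₗ[ℝ] V) (hA : ∀ X Y : V, ⟪A X, Y⟫_ℝ = ⟪X, A Y⟫_ℝ)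
    (k : ℝ) (hk : k ≠ 0)
    (α β : ℝ) (hβ : β ≠ 0) (U : V) (hU : ‖U‖ = 1) (hUξ : ⟪U, ξ⟫_ℝ = 0)
    (hAξ : A ξ = α • ξ + β • U)
    (hphi : ∀ X Y : V, ⟪X, ξ⟫_ℝ = 0 → ⟪Y, ξ⟫_ℝ = 0 →
      AT φ A ξ k (φ X) Y = φ (AT φ A ξ k X Y)) :
    A (φ U) = 0 ∧ A U = β • ξ ∧
      (∀ Z : V, ⟪Z, ξ⟫_ℝ = 0 → ⟪Z, U⟫_ℝ = 0 → ⟪Z, φ U⟫_ℝ = 0 → A Z = 0) ∧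
      (∀ X Y : V, ⟪X, ξ⟫_ℝ = 0 → ⟪Y, ξ⟫_ℝ = 0 → ⟪A X, Y⟫_ℝ = 0) :=
  thm6_nonHopf_general φ ξ hξ hφφ hφg A hA k α β hβ U hU hUξ hAξ hphi
end

section
/- Let V, g, φ, ξ, η, A, D be as in the context, let k be a nonzero real number, and suppose Aξ = αξ + βU for some real numbers α, β with β ≠ 0 and some unit vector U ∈ D (the non-Hopf case). Then it is impossible that A_T^{(k)}(X, φY) = φ(A_T^{(k)}(X, Y)) for all X, Y ∈ D. (Theorem 7, non-Hopf case: the conditions force AU = βξ + (k/3)U, A(φU) = (k/3)φU, k = 3α, and finally β = 0, a contradiction.) -/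
open scoped InnerProductSpace

theorem thm7_nonHopf {V : Type*} [NormedAddCommGroup V] [InnerProductSpace ℝ V]
    [FiniteDimensional ℝ V] (hdim : 5 ≤ Module.finrank ℝ V)
    (φ : V →ₗ[ℝ] V) (ξ : V) (hξ : ‖ξ‖ = 1)
    (hφφ : ∀ X : V, φ (φ X) = -X + ⟪X, ξ⟫_ℝ • ξ)
    (hφg : ∀ X Y : V, ⟪φ X, φ Y⟫_ℝ = ⟪X, Y⟫_ℝ - ⟪X, ξ⟫_ℝ * ⟪Y, ξ⟫_ℝ)
    (A : V →ₗ[ℝ] V) (hA : ∀ X Y : V, ⟪A X, Y⟫_ℝ = ⟪X, A Y⟫_ℝ)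
    (k : ℝ) (hk : k ≠ 0)
    (α β : ℝ) (hβ : β ≠ 0) (U : V) (hU : ‖U‖ = 1) (hUξ : ⟪U, ξ⟫_ℝ = 0)
    (hAξ : A ξ = α • ξ + β • U) :
    ¬ (∀ X Y : V, ⟪X, ξ⟫_ℝ = 0 → ⟪Y, ξ⟫_ℝ = 0 →
      AT φ A ξ k X (φ Y) = φ (AT φ A ξ k X Y)) := by
  intro h
  -- basic structure facts
  have hξξ : ⟪ξ, ξ⟫_ℝ = 1 := by
    rw [real_inner_self_eq_norm_sq, hξ]; norm_num
  have hξ0 : ξ ≠ 0 := by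
    intro h0; rw [h0, norm_zero] at hξ; norm_num at hξ
  have hφξ : φ ξ = 0 := by
    have h0 : ⟪φ ξ, φ ξ⟫_ℝ = 0 := by rw [hφg, hξξ]; ring
    exact inner_self_eq_zero.mp h0
  have hηφ : ∀ X, ⟪φ X, ξ⟫_ℝ = 0 := by
    intro X
    have h1 : φ (φ (φ X)) = -(φ X) + ⟪φ X, ξ⟫_ℝ • ξ := hφφ (φ X)
    have h2 : φ (φ (φ X)) = -(φ X) := by
      rw [hφφ X, map_add, map_neg, map_smul, hφξ, smul_zero, add_zero]
    rw [h2] at h1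
    have h3 : ⟪φ X, ξ⟫_ℝ • ξ = 0 := by
      rw [eq_comm, add_comm, ← eq_sub_iff_add_eq, sub_self] at h1
      exact h1
    rcases smul_eq_zero.mp h3 with h4 | h4
    · exact h4
    · exact absurd h4 hξ0
  have hskew : ∀ X Y, ⟪φ X, Y⟫_ℝ = -⟪X, φ Y⟫_ℝ := by
    intro X Y
    have h1 : ⟪φ X, φ (φ Y)⟫_ℝ = ⟪X, φ Y⟫_ℝ := by
      rw [hφg, hηφ, mul_zero, sub_zero]
    rw [hφφ Y, inner_add_right, inner_neg_right, real_inner_smul_right, hηφ, mul_zero,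
      add_zero] at h1
    linarith
  -- get Z orthogonal to ξ, U, φ U
  obtain ⟨Z, hZ0, hZξ, hZU, hZφU⟩ :
      ∃ Z : V, Z ≠ 0 ∧ ⟪Z, ξ⟫_ℝ = 0 ∧ ⟪Z, U⟫_ℝ = 0 ∧ ⟪Z, φ U⟫_ℝ = 0 := by
    set S := Submodule.span ℝ (Set.range ![ξ, U, φ U]) with hS
    have h1 : Module.finrank ℝ S ≤ 3 := by
      simpa [Set.finrank] using finrank_range_le_card ![ξ, U, φ U]
    have h2 : Module.finrank ℝ S + Module.finrank ℝ Sᗮ = Module.finrank ℝ V :=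
      Submodule.finrank_add_finrank_orthogonal S
    have h3 : 0 < Module.finrank ℝ Sᗮ := by omega
    have h4 : Nontrivial Sᗮ := Module.finrank_pos_iff.mp h3
    obtain ⟨⟨Z, hZmem⟩, hZne⟩ := exists_ne (0 : Sᗮ)
    have hZ0 : Z ≠ 0 := by intro h0; apply hZne; ext; simpa using h0
    have key : ∀ v ∈ S, ⟪Z, v⟫_ℝ = 0 := fun v hv =>
      Submodule.inner_left_of_mem_orthogonal hv hZmem
    exact ⟨Z, hZ0, key ξ (Submodule.subset_span ⟨0, rfl⟩),
      key U (Submodule.subset_span ⟨1, rfl⟩), key (φ U) (Submodule.subset_span ⟨2, rfl⟩)⟩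
  -- derived inner product facts
  have hUU : ⟪U, U⟫_ℝ = 1 := by rw [real_inner_self_eq_norm_sq, hU]; norm_num
  have hφUξ : ⟪φ U, ξ⟫_ℝ = 0 := hηφ U
  have hφZξ : ⟪φ Z, ξ⟫_ℝ = 0 := hηφ Z
  have hφUU : ⟪φ U, U⟫_ℝ = 0 := by
    have := hskew U U
    have h2 : ⟪U, φ U⟫_ℝ = ⟪φ U, U⟫_ℝ := real_inner_comm _ _
    linarith
  have hφZU : ⟪φ Z, U⟫_ℝ = 0 := by rw [hskew]; rw [hZφU]; ring
  have hUZ : ⟪U, Z⟫_ℝ = 0 := by rw [real_inner_comm]; exact hZU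
  have hφUφZ : ⟪φ U, φ Z⟫_ℝ = 0 := by rw [hφg, hUξ, hUZ]; ring
  have hφZφZ : ⟪φ Z, φ Z⟫_ℝ = ⟪Z, Z⟫_ℝ := by rw [hφg, hZξ]; ring
  have hAUξ : ⟪A U, ξ⟫_ℝ = β := by
    rw [hA, hAξ, inner_add_right, real_inner_smul_right, real_inner_smul_right, hUξ, hUU]; ring
  have hAZξ : ⟪A Z, ξ⟫_ℝ = 0 := by
    rw [hA, hAξ, inner_add_right, real_inner_smul_right, real_inner_smul_right, hZξ, hZU]; ring
  have hAφUξ : ⟪A (φ U), ξ⟫_ℝ = 0 := by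
    rw [hA, hAξ, inner_add_right, real_inner_smul_right, real_inner_smul_right, hφUξ, hφUU]; ring
  have hAφZξ : ⟪A (φ Z), ξ⟫_ℝ = 0 := by
    rw [hA, hAξ, inner_add_right, real_inner_smul_right, real_inner_smul_right, hφZξ, hφZU]; ring
  have hξZ : ⟪ξ, Z⟫_ℝ = 0 := by rw [real_inner_comm]; exact hZξ
  have hξU : ⟪ξ, U⟫_ℝ = 0 := by rw [real_inner_comm]; exact hUξ
  have hξφU : ⟪ξ, φ U⟫_ℝ = 0 := by rw [real_inner_comm]; exact hφUξ
  have hξφZ : ⟪ξ, φ Z⟫_ℝ = 0 := by rw [real_inner_comm]; exact hφZξ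
  have hUφU : ⟪U, φ U⟫_ℝ = 0 := by rw [real_inner_comm]; exact hφUU
  have hUφZ : ⟪U, φ Z⟫_ℝ = 0 := by rw [real_inner_comm]; exact hφZU
  have hφUZ : ⟪φ U, Z⟫_ℝ = 0 := by rw [real_inner_comm]; exact hZφU
  have hφZφU : ⟪φ Z, φ U⟫_ℝ = 0 := by rw [real_inner_comm]; exact hφUφZ
  have hZZ : (0:ℝ) < ⟪Z, Z⟫_ℝ := by
    rw [real_inner_self_eq_norm_sq]
    exact pow_pos (norm_pos_iff.mpr hZ0) 2
  -- instance 1 : (X, Y) = (Z, U), inner with Z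
  have E1 := congrArg (fun v => ⟪v, Z⟫_ℝ) (h Z U hZξ hUξ)
  simp only [AT, torT, choF, map_sub, map_smul, map_add, map_neg, inner_sub_left,
    inner_add_left, inner_neg_left, real_inner_smul_left, hφξ, hAξ, hφφ,
    inner_zero_left, smul_zero, inner_add_right, inner_neg_right, real_inner_smul_right,
    inner_sub_right, smul_add, smul_sub, smul_neg,
    hZξ, hUξ, hφUξ, hφZξ, hφUU, hφZU, hZU, hUZ, hZφU, hφUφZ, hφZφZ,
    hξZ, hξU, hξφU, hξφZ, hUφU, hUφZ, hφUZ, hφZφU,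
    hAUξ, hAZξ, hAφUξ, hAφZξ, hξξ, hUU,
    mul_zero, zero_mul, mul_one, one_mul, zero_smul, neg_zero, add_zero, zero_add,
    sub_zero, zero_sub, neg_neg] at E1
  -- instance 2 : (X, Y) = (φ Z, U), inner with φ Z
  have E2 := congrArg (fun v => ⟪v, φ Z⟫_ℝ) (h (φ Z) U hφZξ hUξ)
  simp only [AT, torT, choF, map_sub, map_smul, map_add, map_neg, inner_sub_left,
    inner_add_left, inner_neg_left, real_inner_smul_left, hφξ, hAξ, hφφ,
    inner_zero_left, smul_zero, inner_add_right, inner_neg_right, real_inner_smul_right,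
    inner_sub_right, smul_add, smul_sub, smul_neg,
    hZξ, hUξ, hφUξ, hφZξ, hφUU, hφZU, hZU, hUZ, hZφU, hφUφZ, hφZφZ,
    hξZ, hξU, hξφU, hξφZ, hUφU, hUφZ, hφUZ, hφZφU,
    hAUξ, hAZξ, hAφUξ, hAφZξ, hξξ, hUU,
    mul_zero, zero_mul, mul_one, one_mul, zero_smul, neg_zero, add_zero, zero_add,
    sub_zero, zero_sub, neg_neg] at E2
  -- instance 3 : (X, Y) = (Z, Z), inner with U
  have E3 := congrArg (fun v => ⟪v, U⟫_ℝ) (h Z Z hZξ hZξ)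
  simp only [AT, torT, choF, map_sub, map_smul, map_add, map_neg, inner_sub_left,
    inner_add_left, inner_neg_left, real_inner_smul_left, hφξ, hAξ, hφφ,
    inner_zero_left, smul_zero, inner_add_right, inner_neg_right, real_inner_smul_right,
    inner_sub_right, smul_add, smul_sub, smul_neg,
    hZξ, hUξ, hφUξ, hφZξ, hφUU, hφZU, hZU, hUZ, hZφU, hφUφZ, hφZφZ,
    hξZ, hξU, hξφU, hξφZ, hUφU, hUφZ, hφUZ, hφZφU,
    hAUξ, hAZξ, hAφUξ, hAφZξ, hξξ, hUU,
    mul_zero, zero_mul, mul_one, one_mul, zero_smul, neg_zero, add_zero, zero_add,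
    sub_zero, zero_sub, neg_neg] at E3
  -- convert atoms in E3
  have e3a : ⟪φ (A Z), φ Z⟫_ℝ = ⟪A Z, Z⟫_ℝ := by rw [hφg, hAZξ]; ring
  have e3b : ⟪φ (A (φ Z)), Z⟫_ℝ = -⟪A (φ Z), φ Z⟫_ℝ := hskew _ _
  rw [e3a, e3b] at E3
  -- conclude
  have hne : k * (β * ⟪Z, Z⟫_ℝ) ≠ 0 :=
    mul_ne_zero hk (mul_ne_zero hβ (ne_of_gt hZZ))
  have hfin : k * (β * ⟪Z, Z⟫_ℝ) = 0 := by
    linear_combination (1/2) * E1 + (1/2) * E2 - (1/2) * E3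
  exact hne hfin
end
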